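/- (Lemma 7) Assume ω = u + iv is in the upper half-plane with |ω| ≤ 1, Re(ω) ≥ 0, |ω − 1| ≤ 1, and u, k² ∈ ℚ (k = |ω|). Let ξ > 0 and β₀ ∈ (2/3, 1). Then there exists Q₀ = Q₀(ξ, ω), independent of M, such that for every M ∈ SL₂(ℤ) with nonnegative entries, M ≠ I, satisfying max{X_M, Y_M} ≥ Q^{2β₀}, one has 𝓝⁺_{M,Q}(ξ) = 0 for all Q ≥ Q₀. -/

import Mathlib

open Complex Matrix MatrixGroups UpperHalfPlane Real

noncomputable section

/-- real entry `γ i j` of an integer matrix. -/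
def ent (γ : SL(2,ℤ)) (i j : Fin 2) : ℝ := ((γ i j : ℤ) : ℝ)

/-- `X_γ = |aω+b|²`. -/
def Xg (ω : ℂ) (γ : SL(2,ℤ)) : ℝ := (Norm.norm (ent γ 0 0 * ω + (ent γ 0 1 : ℂ))) ^ 2

/-- `Y_γ = |cω+d|²`. -/
def Yg (ω : ℂ) (γ : SL(2,ℤ)) : ℝ := (Norm.norm (ent γ 1 0 * ω + (ent γ 1 1 : ℂ))) ^ 2

/-- `Z_γ = ac|ω|² + bd + u(ad+bc)`. -/
def Zg (ω : ℂ) (γ : SL(2,ℤ)) : ℝ :=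
  ent γ 0 0 * ent γ 1 0 * (Norm.norm ω) ^ 2 + ent γ 0 1 * ent γ 1 1
    + ω.re * (ent γ 0 0 * ent γ 1 1 + ent γ 0 1 * ent γ 1 0)

/-- `T_γ = ‖γ‖² = X_γ + k²Y_γ − 2uZ_γ`. -/
def Tg (ω : ℂ) (γ : SL(2,ℤ)) : ℝ :=
  Xg ω γ + (Norm.norm ω) ^ 2 * Yg ω γ - 2 * ω.re * Zg ω γ

/-- `Φ(γ) = Re(γω)`. -/
def Phi (ω : ℍ) (γ : SL(2,ℤ)) : ℝ := ((γ • ω : ℍ) : ℂ).re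

/-- `ε_T = (T_γ − √(T_γ² − Δ²))/Δ` with `Δ = 2v²`. -/
def epsT (ω : ℂ) (γ : SL(2,ℤ)) : ℝ :=
  (Tg ω γ - Real.sqrt ((Tg ω γ) ^ 2 - (2 * ω.im ^ 2) ^ 2)) / (2 * ω.im ^ 2)

/-- `Ψ(γ) = (Z_γ − u ε_T)/(Y_γ − ε_T)`, the x-intercept of the geodesic `ω → γω`. -/
def Psi (ω : ℍ) (γ : SL(2,ℤ)) : ℝ :=
  (Zg ω γ - (ω : ℂ).re * epsT ω γ) / (Yg ω γ - epsT ω γ)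

/-- `𝓢_{M,Q}(ξ)`. -/
def SMQ (ω : ℍ) (M : SL(2,ℤ)) (Q ξ : ℝ) : Set (SL(2,ℤ)) :=
  {γ | |Phi ω (γ * M) - Phi ω γ| ≤ ξ / Q ^ 2 ∧
    Norm.norm ((γ • ω : ℍ) : ℂ) < Norm.norm (ω : ℂ) ∧
    Norm.norm (((γ * M) • ω : ℍ) : ℂ) < Norm.norm (ω : ℂ) ∧
    Real.sqrt (Tg ω γ) ≤ Q ∧ Real.sqrt (Tg ω (γ * M)) ≤ Q}

/-- `𝓝⁺_{M,Q}(ξ) = #𝓢⁺_{M,Q}(ξ)`, where `𝓢⁺` demands `c, d > 0`. -/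
def NMQplus (ω : ℍ) (M : SL(2,ℤ)) (Q ξ : ℝ) : ℕ :=
  (SMQ ω M Q ξ ∩ {γ | 0 < γ 1 0 ∧ 0 < γ 1 1}).ncard


set_option maxHeartbeats 1000000

namespace St8

private lemma one_le_of_sq {s x : ℝ} (h : x = s ^ 2) (h1 : 1 ≤ x) (hs : 0 ≤ s) : 1 ≤ s := by
  nlinarith

private lemma sq_le_of_abs_le {R x : ℝ} (h : |R| ≤ x) : R ^ 2 ≤ x ^ 2 := by
  have h0 := abs_nonneg R
  nlinarith [_root_.sq_abs R]

private lemma le_of_sq_le_sq {a b : ℝ} (hb : 0 ≤ b) (h : a ^ 2 ≤ b ^ 2) (ha : 0 ≤ a) : a ≤ b := by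
  nlinarith

lemma arith
    (v μ D ξ Q K₁ Cα Cβ XM YM Y Y' s R P1 P2 A B c d N : ℝ)
    (hv : 0 < v) (hv1 : v ≤ 1) (hμ : 0 < μ)
    (hD : 1 ≤ D) (hξ : 0 < ξ) (hQ : 1 ≤ Q) (hK₁ : 0 < K₁)
    (hCα : 0 ≤ Cα) (hCβ : 0 ≤ Cβ)
    (hY1 : 1 ≤ Y)
    (hXM : 0 ≤ XM) (hYM : 0 ≤ YM)
    (hN1 : 1 ≤ N)
    (hNmax : N ≤ max XM YM) (hNY' : N ≤ Y')
    (h1 : XM * Y' = P1 ^ 2 + d ^ 2 * v ^ 2)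
    (h2 : YM * Y' = P2 ^ 2 + c ^ 2 * v ^ 2)
    (h3 : Y * P1 = B * Y' + d * R)
    (h4 : Y * P2 = A * Y' - c * R)
    (h5 : d ^ 2 ≤ Y) (h6 : c ^ 2 * v ^ 2 ≤ Y)
    (h7 : B ^ 2 ≤ Cβ * Y) (h8 : A ^ 2 ≤ Cα * Y)
    (h9 : |R| ≤ ξ * Y * Y' / Q ^ 2)
    (h12 : K₁ * Y ≤ Q ^ 2) (h13 : K₁ * Y' ≤ Q ^ 2)
    (h14 : Y' = s ^ 2) (hs : 0 ≤ s)
    (h15 : μ / (D * Y * s) ≤ ξ / Q ^ 2 + v / Y')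
    (hQc1 : 2 * Q ^ 2 ≤ K₁ * N ^ 2)
    (hQc2 : 4 * v ^ 2 * D ^ 2 *
        (2 * (2 * max Cα Cβ + (2 + 2 / v ^ 2) * (ξ ^ 2 / K₁ ^ 2)) / K₁) ^ 2 * Q ^ 4
        ≤ μ ^ 2 * N ^ 3)
    (hQc3 : 2 * ξ * D * (2 * (2 * max Cα Cβ + (2 + 2 / v ^ 2) * (ξ ^ 2 / K₁ ^ 2)) / K₁)
        / (μ * Real.sqrt K₁) * Q < N) : False := by
  obtain ⟨K₂, hK₂def⟩ : ∃ K₂ : ℝ, K₂ = 2 * max Cα Cβ + (2 + 2 / v ^ 2) * (ξ ^ 2 / K₁ ^ 2) :=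
    ⟨_, rfl⟩
  obtain ⟨K₃, hK₃def⟩ : ∃ K₃ : ℝ, K₃ = 2 * K₂ / K₁ := ⟨_, rfl⟩
  rw [← hK₂def, ← hK₃def] at hQc2 hQc3
  have hmaxCC : 0 ≤ max Cα Cβ := le_trans hCα (le_max_left _ _)
  have hK₂0 : 0 < K₂ := by rw [hK₂def]; positivity
  have hK₃0 : 0 < K₃ := by rw [hK₃def]; positivity
  have hQ0 : (0:ℝ) < Q := lt_of_lt_of_le one_pos hQ
  have hQ2 : (0:ℝ) < Q ^ 2 := by positivity
  have hN0 : (0:ℝ) < N := lt_of_lt_of_le one_pos hN1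
  have hY0 : (0:ℝ) < Y := lt_of_lt_of_le one_pos hY1
  have hY'0 : (0:ℝ) < Y' := lt_of_lt_of_le hN0 hNY'
  have hs1 : 1 ≤ s := one_le_of_sq h14 (le_trans hN1 hNY') hs
  have hs0 : (0:ℝ) < s := lt_of_lt_of_le one_pos hs1
  have hYQ : Y ≤ Q ^ 2 / K₁ := (le_div_iff₀ hK₁).2 (by linarith [h12])
  -- |R| ≤ (ξ/K₁) Y'
  have hRa : |R| ≤ ξ / K₁ * Y' := by
    have t1 : ξ * Y * Y' * K₁ ≤ ξ * Y' * Q ^ 2 := by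
      nlinarith only [h12, mul_le_mul_of_nonneg_left h12 (mul_nonneg hξ.le hY'0.le)]
    have e : ξ / K₁ * Y' * Q ^ 2 * K₁ = ξ * Y' * Q ^ 2 := by
      field_simp
    have t2 : ξ * Y * Y' / Q ^ 2 ≤ ξ / K₁ * Y' := by
      rw [div_le_iff₀ hQ2]
      have t3 : ξ * Y * Y' * K₁ ≤ ξ / K₁ * Y' * Q ^ 2 * K₁ := by
        rw [e]; exact t1
      exact le_of_mul_le_mul_right t3 hK₁
    exact le_trans h9 t2
  have hRb : R ^ 2 ≤ ξ ^ 2 / K₁ ^ 2 * Y' ^ 2 := by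
    have h0 := sq_le_of_abs_le hRa
    calc R ^ 2 ≤ (ξ / K₁ * Y') ^ 2 := h0
      _ = ξ ^ 2 / K₁ ^ 2 * Y' ^ 2 := by rw [mul_pow, div_pow]
  have hKK : 2 * Cβ + 2 * (ξ ^ 2 / K₁ ^ 2) ≤ K₂ := by
    rw [hK₂def]
    have t1 : Cβ ≤ max Cα Cβ := le_max_right _ _
    have t2 : 0 ≤ 2 / v ^ 2 * (ξ ^ 2 / K₁ ^ 2) := by positivity
    nlinarith only [t1, t2]
  have hKKα : 2 * Cα + 2 / v ^ 2 * (ξ ^ 2 / K₁ ^ 2) ≤ K₂ := by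
    rw [hK₂def]
    have t1 : Cα ≤ max Cα Cβ := le_max_left _ _
    have t2 : 0 ≤ 2 * (ξ ^ 2 / K₁ ^ 2) := by positivity
    nlinarith only [t1, t2]
  -- G1 for XM
  have G1x : XM * Y' * Y ≤ K₂ * Y' ^ 2 + Y ^ 2 := by
    have p1 : (Y * P1) ^ 2 ≤ 2 * B ^ 2 * Y' ^ 2 + 2 * d ^ 2 * R ^ 2 := by
      rw [h3]; nlinarith only [sq_nonneg (B * Y' - d * R)]
    have p2 : d ^ 2 * R ^ 2 ≤ Y * (ξ ^ 2 / K₁ ^ 2 * Y' ^ 2) :=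
      mul_le_mul h5 hRb (sq_nonneg R) hY0.le
    have p2' : d ^ 2 * R ^ 2 ≤ ξ ^ 2 / K₁ ^ 2 * (Y * Y' ^ 2) := by
      calc d ^ 2 * R ^ 2 ≤ Y * (ξ ^ 2 / K₁ ^ 2 * Y' ^ 2) := p2
        _ = ξ ^ 2 / K₁ ^ 2 * (Y * Y' ^ 2) := by ring
    have p3 : B ^ 2 * Y' ^ 2 ≤ Cβ * (Y * Y' ^ 2) := by
      calc B ^ 2 * Y' ^ 2 ≤ Cβ * Y * Y' ^ 2 := mul_le_mul_of_nonneg_right h7 (sq_nonneg Y')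
        _ = Cβ * (Y * Y' ^ 2) := by ring
    have p4 : d ^ 2 * (v ^ 2 * Y ^ 2) ≤ Y ^ 3 := by
      have t1 : d ^ 2 * (v ^ 2 * Y ^ 2) ≤ Y * (v ^ 2 * Y ^ 2) :=
        mul_le_mul_of_nonneg_right h5 (by positivity)
      have t2 : Y * (v ^ 2 * Y ^ 2) ≤ Y * (1 * Y ^ 2) := by
        have : v ^ 2 ≤ 1 := by nlinarith only [hv, hv1]
        have := mul_le_mul_of_nonneg_right (mul_le_mul_of_nonneg_right this (sq_nonneg Y)) hY0.le
        nlinarith only [this]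
      nlinarith only [t1, t2]
    have p5 : (2 * Cβ + 2 * (ξ ^ 2 / K₁ ^ 2)) * (Y * Y' ^ 2) ≤ K₂ * (Y * Y' ^ 2) :=
      mul_le_mul_of_nonneg_right hKK (by positivity)
    have e : XM * Y' * Y ^ 2 = (Y * P1) ^ 2 + d ^ 2 * (v ^ 2 * Y ^ 2) := by
      linear_combination Y ^ 2 * h1
    have main : (XM * Y' * Y) * Y ≤ (K₂ * Y' ^ 2 + Y ^ 2) * Y := by
      have lhs : (XM * Y' * Y) * Y = XM * Y' * Y ^ 2 := by ring
      have rhs : (K₂ * Y' ^ 2 + Y ^ 2) * Y = K₂ * (Y * Y' ^ 2) + Y ^ 3 := by ring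
      rw [lhs, rhs, e]
      linarith only [p1, p2', p3, p4, p5]
    exact le_of_mul_le_mul_right main hY0
  -- G1 for YM
  have G1y : YM * Y' * Y ≤ K₂ * Y' ^ 2 + Y ^ 2 := by
    have p1 : (Y * P2) ^ 2 ≤ 2 * A ^ 2 * Y' ^ 2 + 2 * c ^ 2 * R ^ 2 := by
      rw [h4]; nlinarith only [sq_nonneg (A * Y' + c * R)]
    have hc2 : c ^ 2 ≤ Y / v ^ 2 := by
      rw [le_div_iff₀ (by positivity : (0:ℝ) < v ^ 2)]
      linarith only [h6]
    have p2 : c ^ 2 * R ^ 2 ≤ (Y / v ^ 2) * (ξ ^ 2 / K₁ ^ 2 * Y' ^ 2) :=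
      mul_le_mul hc2 hRb (sq_nonneg R) (by positivity)
    have p2' : c ^ 2 * R ^ 2 ≤ 1 / v ^ 2 * (ξ ^ 2 / K₁ ^ 2) * (Y * Y' ^ 2) := by
      calc c ^ 2 * R ^ 2 ≤ (Y / v ^ 2) * (ξ ^ 2 / K₁ ^ 2 * Y' ^ 2) := p2
        _ = 1 / v ^ 2 * (ξ ^ 2 / K₁ ^ 2) * (Y * Y' ^ 2) := by ring
    have p3 : A ^ 2 * Y' ^ 2 ≤ Cα * (Y * Y' ^ 2) := by
      calc A ^ 2 * Y' ^ 2 ≤ Cα * Y * Y' ^ 2 := mul_le_mul_of_nonneg_right h8 (sq_nonneg Y')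
        _ = Cα * (Y * Y' ^ 2) := by ring
    have p4 : c ^ 2 * v ^ 2 * Y ^ 2 ≤ Y ^ 3 := by
      have t1 : c ^ 2 * v ^ 2 * Y ^ 2 ≤ Y * Y ^ 2 :=
        mul_le_mul_of_nonneg_right h6 (sq_nonneg Y)
      nlinarith only [t1]
    have p5 : (2 * Cα + 2 * (1 / v ^ 2 * (ξ ^ 2 / K₁ ^ 2))) * (Y * Y' ^ 2) ≤ K₂ * (Y * Y' ^ 2) := by
      apply mul_le_mul_of_nonneg_right _ (by positivity)
      have : 2 * (1 / v ^ 2 * (ξ ^ 2 / K₁ ^ 2)) = 2 / v ^ 2 * (ξ ^ 2 / K₁ ^ 2) := by ring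
      linarith only [hKKα, this.le, this.ge]
    have e : YM * Y' * Y ^ 2 = (Y * P2) ^ 2 + c ^ 2 * v ^ 2 * Y ^ 2 := by
      linear_combination Y ^ 2 * h2
    have main : (YM * Y' * Y) * Y ≤ (K₂ * Y' ^ 2 + Y ^ 2) * Y := by
      have lhs : (YM * Y' * Y) * Y = YM * Y' * Y ^ 2 := by ring
      have rhs : (K₂ * Y' ^ 2 + Y ^ 2) * Y = K₂ * (Y * Y' ^ 2) + Y ^ 3 := by ring
      rw [lhs, rhs, e]
      linarith only [p1, p2', p3, p4, p5]
    exact le_of_mul_le_mul_right main hY0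
  -- G1 : N (Y Y') ≤ K₂ Y'² + Y²
  have G1 : N * (Y * Y') ≤ K₂ * Y' ^ 2 + Y ^ 2 := by
    rcases max_cases XM YM with ⟨hmx, _⟩ | ⟨hmx, _⟩
    · calc N * (Y * Y') ≤ XM * (Y * Y') := by
            apply mul_le_mul_of_nonneg_right (hmx ▸ hNmax) (by positivity)
        _ = XM * Y' * Y := by ring
        _ ≤ _ := G1x
    · calc N * (Y * Y') ≤ YM * (Y * Y') := by
            apply mul_le_mul_of_nonneg_right (hmx ▸ hNmax) (by positivity)
        _ = YM * Y' * Y := by ring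
        _ ≤ _ := G1y
  -- G2 : Y² ≤ N (Y Y') / 2
  have G2 : 2 * Y ^ 2 ≤ N * (Y * Y') := by
    have t1 : 2 * Y ≤ N ^ 2 := by
      have : 2 * Y * K₁ ≤ 2 * Q ^ 2 := by linarith only [h12]
      have t := le_trans this hQc1
      exact le_of_mul_le_mul_right (by linarith only [t]) hK₁
    have t2 : N ^ 2 ≤ N * Y' := by nlinarith only [hNY', hN0]
    have t3 : 2 * Y ≤ N * Y' := le_trans t1 t2
    calc 2 * Y ^ 2 = (2 * Y) * Y := by ring
      _ ≤ (N * Y') * Y := mul_le_mul_of_nonneg_right t3 hY0.le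
      _ = N * (Y * Y') := by ring
  -- G3 : N Y ≤ K₃ Q²
  have G3 : N * Y ≤ K₃ * Q ^ 2 := by
    have t1 : N * (Y * Y') ≤ 2 * K₂ * Y' ^ 2 := by linarith only [G1, G2]
    have t2 : (N * Y) * Y' ≤ (2 * K₂ * Y') * Y' := by
      calc (N * Y) * Y' = N * (Y * Y') := by ring
        _ ≤ 2 * K₂ * Y' ^ 2 := t1
        _ = (2 * K₂ * Y') * Y' := by ring
    have t3 : N * Y ≤ 2 * K₂ * Y' := le_of_mul_le_mul_right t2 hY'0
    have t4 : 2 * K₂ * Y' * K₁ ≤ 2 * K₂ * Q ^ 2 := by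
      have := mul_le_mul_of_nonneg_left h13 (by positivity : (0:ℝ) ≤ 2 * K₂)
      calc 2 * K₂ * Y' * K₁ = 2 * K₂ * (K₁ * Y') := by ring
        _ ≤ 2 * K₂ * Q ^ 2 := this
    have t5 : 2 * K₂ * Y' ≤ K₃ * Q ^ 2 := by
      have e : K₃ * Q ^ 2 * K₁ = 2 * K₂ * Q ^ 2 := by
        rw [hK₃def]; field_simp
      exact le_of_mul_le_mul_right (by rw [e]; exact t4) hK₁
    linarith only [t3, t5]
  -- G4 : 2 v Y D ≤ μ s
  have G4 : 2 * v * Y * D ≤ μ * s := by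
    have sq1 : (2 * v * Y * D) ^ 2 * N ^ 2 ≤ 4 * v ^ 2 * D ^ 2 * (K₃ * Q ^ 2) ^ 2 := by
      have t : (N * Y) ^ 2 ≤ (K₃ * Q ^ 2) ^ 2 := by
        nlinarith only [G3, hN0, hY0, mul_pos hN0 hY0]
      calc (2 * v * Y * D) ^ 2 * N ^ 2 = 4 * v ^ 2 * D ^ 2 * (N * Y) ^ 2 := by ring
        _ ≤ 4 * v ^ 2 * D ^ 2 * (K₃ * Q ^ 2) ^ 2 := by
            apply mul_le_mul_of_nonneg_left t (by positivity)
    have sq2 : 4 * v ^ 2 * D ^ 2 * (K₃ * Q ^ 2) ^ 2 = 4 * v ^ 2 * D ^ 2 * K₃ ^ 2 * Q ^ 4 := by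
      ring
    have sq3 : (2 * v * Y * D) ^ 2 * N ^ 2 ≤ μ ^ 2 * N ^ 3 := by
      rw [sq2] at sq1; exact le_trans sq1 hQc2
    have sq4 : (2 * v * Y * D) ^ 2 ≤ μ ^ 2 * N := by
      have e : μ ^ 2 * N ^ 3 = (μ ^ 2 * N) * N ^ 2 := by ring
      rw [e] at sq3
      exact le_of_mul_le_mul_right sq3 (by positivity)
    have sq5 : (2 * v * Y * D) ^ 2 ≤ (μ * s) ^ 2 := by
      have t : μ ^ 2 * N ≤ μ ^ 2 * Y' := by
        apply mul_le_mul_of_nonneg_left hNY' (by positivity)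
      calc (2 * v * Y * D) ^ 2 ≤ μ ^ 2 * N := sq4
        _ ≤ μ ^ 2 * Y' := t
        _ = (μ * s) ^ 2 := by rw [h14]; ring
    exact le_of_sq_le_sq (by positivity) sq5 (by positivity)
  -- G5 : v / Y' ≤ μ / (2 (D Y s))
  have hDYs : (0:ℝ) < D * Y * s := by positivity
  have G5 : v / Y' ≤ μ / (2 * (D * Y * s)) := by
    rw [div_le_div_iff₀ hY'0 (by positivity)]
    have t : (2 * v * Y * D) * s ≤ (μ * s) * s := mul_le_mul_of_nonneg_right G4 hs
    calc v * (2 * (D * Y * s)) = (2 * v * Y * D) * s := by ring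
      _ ≤ (μ * s) * s := t
      _ = μ * s ^ 2 := by ring
      _ = μ * Y' := by rw [h14]
  -- G6 : μ / (2 D Y s) ≤ ξ / Q²
  have G6 : μ / (2 * (D * Y * s)) ≤ ξ / Q ^ 2 := by
    have e : μ / (D * Y * s) = 2 * (μ / (2 * (D * Y * s))) := by
      rw [mul_div_assoc']
      rw [mul_div_mul_left _ _ (two_ne_zero)]
    linarith only [h15, G5, e.le, e.ge]
  -- G7 : s ≤ Q / √K₁
  have hsqK : (0:ℝ) < Real.sqrt K₁ := Real.sqrt_pos.2 hK₁
  have G7 : s ≤ Q / Real.sqrt K₁ := by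
    have t1 : s ^ 2 ≤ (Q / Real.sqrt K₁) ^ 2 := by
      have e : (Q / Real.sqrt K₁) ^ 2 = Q ^ 2 / K₁ := by
        rw [div_pow, Real.sq_sqrt hK₁.le]
      rw [e, ← h14]
      exact (le_div_iff₀ hK₁).2 (by linarith only [h13])
    exact le_of_sq_le_sq (by positivity) t1 hs
  -- G8 : μ Q² ≤ 2 ξ D Y s
  have G8 : μ * Q ^ 2 ≤ ξ * (2 * (D * Y * s)) := by
    rw [div_le_div_iff₀ (by positivity) hQ2] at G6
    linarith only [G6]
  -- G9 : N ≤ K₄ Q, contradiction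
  have G9 : N ≤ 2 * ξ * D * K₃ / (μ * Real.sqrt K₁) * Q := by
    have t1 : (μ * Q ^ 2) * N ≤ (ξ * 2 * D) * ((N * Y) * s) := by
      have := mul_le_mul_of_nonneg_right G8 hN0.le
      calc (μ * Q ^ 2) * N ≤ ξ * (2 * (D * Y * s)) * N := this
        _ = (ξ * 2 * D) * ((N * Y) * s) := by ring
    have t2 : (N * Y) * s ≤ (K₃ * Q ^ 2) * (Q / Real.sqrt K₁) := by
      apply mul_le_mul G3 G7 hs (by positivity)
    have t3 : (μ * Q ^ 2) * N ≤ (ξ * 2 * D) * ((K₃ * Q ^ 2) * (Q / Real.sqrt K₁)) := by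
      calc (μ * Q ^ 2) * N ≤ (ξ * 2 * D) * ((N * Y) * s) := t1
        _ ≤ (ξ * 2 * D) * ((K₃ * Q ^ 2) * (Q / Real.sqrt K₁)) := by
            apply mul_le_mul_of_nonneg_left t2 (by positivity)
    have e : (ξ * 2 * D) * ((K₃ * Q ^ 2) * (Q / Real.sqrt K₁))
        = (2 * ξ * D * K₃ / (μ * Real.sqrt K₁) * Q) * (μ * Q ^ 2) := by
      field_simp
    rw [e] at t3
    have := le_of_mul_le_mul_right
      (by calc N * (μ * Q ^ 2) = (μ * Q ^ 2) * N := by ring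
            _ ≤ _ := t3) (by positivity : (0:ℝ) < μ * Q ^ 2)
    exact this
  linarith only [G9, hQc3]

variable (ω : ℍ)

lemma entdet (δ : SL(2,ℤ)) : ent δ 0 0 * ent δ 1 1 - ent δ 0 1 * ent δ 1 0 = 1 := by
  have h : δ.val.det = 1 := δ.2
  rw [Matrix.det_fin_two] at h
  have : ((δ 0 0 * δ 1 1 - δ 0 1 * δ 1 0 : ℤ) : ℝ) = ((1 : ℤ) : ℝ) := by norm_cast
  simpa [ent] using this

lemma entdetC (δ : SL(2,ℤ)) :
    (ent δ 0 0 : ℂ) * ent δ 1 1 - ent δ 0 1 * ent δ 1 0 = 1 := by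
  exact_mod_cast congrArg (Complex.ofReal) (entdet δ)

lemma absq : (Norm.norm (ω : ℂ)) ^ 2 = (ω : ℂ).re ^ 2 + (ω : ℂ).im ^ 2 := by
  rw [Complex.sq_norm, Complex.normSq_apply]; ring

lemma Yg_eq (δ : SL(2,ℤ)) :
    Yg (ω : ℂ) δ = (ent δ 1 0 * (ω : ℂ).re + ent δ 1 1) ^ 2
      + (ent δ 1 0) ^ 2 * (ω : ℂ).im ^ 2 := by
  rw [Yg, Complex.sq_norm, Complex.normSq_apply]
  simp only [Complex.add_re, Complex.add_im, Complex.mul_re, Complex.mul_im,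
    Complex.ofReal_re, Complex.ofReal_im]
  ring

lemma Xg_eq (δ : SL(2,ℤ)) :
    Xg (ω : ℂ) δ = (ent δ 0 0 * (ω : ℂ).re + ent δ 0 1) ^ 2
      + (ent δ 0 0) ^ 2 * (ω : ℂ).im ^ 2 := by
  rw [Xg, Complex.sq_norm, Complex.normSq_apply]
  simp only [Complex.add_re, Complex.add_im, Complex.mul_re, Complex.mul_im,
    Complex.ofReal_re, Complex.ofReal_im]
  ring

/-- `X Y = Z² + v²`. -/
lemma XYZsq (δ : SL(2,ℤ)) :
    Xg (ω : ℂ) δ * Yg (ω : ℂ) δ = Zg (ω : ℂ) δ ^ 2 + (ω : ℂ).im ^ 2 := by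
  rw [Xg_eq, Yg_eq, Zg, absq]
  linear_combination ((ω : ℂ).im ^ 2 *
    (ent δ 0 0 * ent δ 1 1 - ent δ 0 1 * ent δ 1 0 + 1)) * entdet δ

/-- lower bound for the norm `T`. -/
lemma Tg_ge (hu0 : 0 ≤ (ω : ℂ).re) (δ : SL(2,ℤ)) :
    (Norm.norm (ω : ℂ) - (ω : ℂ).re) * Norm.norm (ω : ℂ) * Yg (ω : ℂ) δ
      ≤ Tg (ω : ℂ) δ := by
  have hX : 0 ≤ Xg (ω : ℂ) δ := by rw [Xg]; positivity
  have hY : 0 ≤ Yg (ω : ℂ) δ := by rw [Yg]; positivity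
  have hk0 : 0 ≤ Norm.norm (ω : ℂ) := norm_nonneg _
  have hZ2 : Zg (ω : ℂ) δ ^ 2 ≤ Xg (ω : ℂ) δ * Yg (ω : ℂ) δ := by
    have := XYZsq ω δ
    nlinarith only [this, sq_nonneg ((ω : ℂ).im)]
  set u := (ω : ℂ).re
  set k := Norm.norm (ω : ℂ)
  set X := Xg (ω : ℂ) δ
  set Y := Yg (ω : ℂ) δ
  set Z := Zg (ω : ℂ) δ
  have hk2 : k ^ 2 = u ^ 2 + (ω : ℂ).im ^ 2 := absq ω
  have huk : u ≤ k := by nlinarith only [hk2, sq_nonneg ((ω : ℂ).im), hu0, hk0]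
  have main : 2 * u * Z ≤ X + u * k * Y := by
    rcases le_or_gt Z 0 with hZ | hZ
    · have : 0 ≤ u * k * Y := by positivity
      nlinarith only [hZ, hu0, hX, this]
    · have q1 : (2 * u * Z) ^ 2 ≤ 4 * u ^ 2 * (X * Y) := by nlinarith only [hZ2, sq_nonneg u]
      have q3 : 0 ≤ 4 * u * (X * Y) * (k - u) := by
        have : 0 ≤ X * Y := mul_nonneg hX hY
        have h1 : 0 ≤ k - u := by linarith only [huk]
        positivity
      have q2 : (2 * u * Z) ^ 2 ≤ (X + u * k * Y) ^ 2 := by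
        nlinarith only [q1, q3, sq_nonneg (X - u * k * Y)]
      have h2 : 0 ≤ X + u * k * Y := by positivity
      have h3 : 0 ≤ 2 * u * Z := by
        have : (0:ℝ) ≤ 2 * u := by linarith only [hu0]
        exact mul_nonneg this hZ.le
      nlinarith only [q2, h2, h3]
  rw [Tg]
  have e : (k - u) * k * Y = k ^ 2 * Y - u * k * Y := by ring
  rw [e]
  linarith only [main]

lemma key_conj (δ : SL(2,ℤ)) :
    ((ent δ 0 0 : ℂ) * (ω : ℂ) + ent δ 0 1) *
      (starRingEnd ℂ) ((ent δ 1 0 : ℂ) * (ω : ℂ) + ent δ 1 1)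
    = (Zg (ω : ℂ) δ : ℝ) + ((ω : ℂ).im : ℝ) * Complex.I := by
  apply Complex.ext
  · simp only [Complex.mul_re, Complex.add_re, Complex.add_im, Complex.mul_im,
      Complex.conj_re, Complex.conj_im, Complex.ofReal_re, Complex.ofReal_im,
      Complex.I_re, Complex.I_im, Complex.mul_re, Zg, absq]
    ring
  · simp only [Complex.mul_im, Complex.add_re, Complex.add_im, Complex.mul_re,
      Complex.conj_re, Complex.conj_im, Complex.ofReal_re, Complex.ofReal_im,
      Complex.I_re, Complex.I_im, Zg]
    have := entdet δ
    linear_combination ((ω : ℂ)).im * this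

lemma Yg_normSq (δ : SL(2,ℤ)) :
    Yg (ω : ℂ) δ = Complex.normSq ((ent δ 1 0 : ℂ) * (ω : ℂ) + ent δ 1 1) := by
  rw [Yg, Complex.sq_norm]

lemma Xg_normSq (δ : SL(2,ℤ)) :
    Xg (ω : ℂ) δ = Complex.normSq ((ent δ 0 0 : ℂ) * (ω : ℂ) + ent δ 0 1) := by
  rw [Xg, Complex.sq_norm]

lemma mul_ent (γ M : SL(2,ℤ)) (i j : Fin 2) :
    ent (γ * M) i j = ent γ i 0 * ent M 0 j + ent γ i 1 * ent M 1 j := by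
  have : (γ * M) i j = γ i 0 * M 0 j + γ i 1 * M 1 j := by
    have h : ((γ * M : SL(2,ℤ)) : Matrix (Fin 2) (Fin 2) ℤ)
        = (γ : Matrix (Fin 2) (Fin 2) ℤ) * M := rfl
    rw [h, Matrix.mul_apply, Fin.sum_univ_two]
  simp [ent, this]

lemma mul_entC (γ M : SL(2,ℤ)) (i j : Fin 2) :
    ((ent (γ * M) i j : ℝ) : ℂ)
      = (ent γ i 0 : ℂ) * (ent M 0 j : ℂ) + (ent γ i 1 : ℂ) * (ent M 1 j : ℂ) := by
  exact_mod_cast congrArg (Complex.ofReal) (mul_ent γ M i j)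

lemma rowM0 (γ M : SL(2,ℤ)) :
    (ent M 0 0 : ℂ) * (ω : ℂ) + ent M 0 1
    = (ent γ 1 1 : ℂ) * ((ent (γ*M) 0 0 : ℂ) * (ω : ℂ) + ent (γ*M) 0 1)
      - (ent γ 0 1 : ℂ) * ((ent (γ*M) 1 0 : ℂ) * (ω : ℂ) + ent (γ*M) 1 1) := by
  rw [mul_entC γ M 0 0, mul_entC γ M 0 1, mul_entC γ M 1 0, mul_entC γ M 1 1]
  linear_combination (-((ent M 0 0 : ℂ) * (ω : ℂ) + ent M 0 1)) * entdetC γ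

lemma rowM1 (γ M : SL(2,ℤ)) :
    (ent M 1 0 : ℂ) * (ω : ℂ) + ent M 1 1
    = (ent γ 0 0 : ℂ) * ((ent (γ*M) 1 0 : ℂ) * (ω : ℂ) + ent (γ*M) 1 1)
      - (ent γ 1 0 : ℂ) * ((ent (γ*M) 0 0 : ℂ) * (ω : ℂ) + ent (γ*M) 0 1) := by
  rw [mul_entC γ M 0 0, mul_entC γ M 0 1, mul_entC γ M 1 0, mul_entC γ M 1 1]
  linear_combination (-((ent M 1 0 : ℂ) * (ω : ℂ) + ent M 1 1)) * entdetC γ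

lemma I1 (γ M : SL(2,ℤ)) :
    Xg (ω : ℂ) M * Yg (ω : ℂ) (γ*M)
    = (ent γ 1 1 * Zg (ω : ℂ) (γ*M) - ent γ 0 1 * Yg (ω : ℂ) (γ*M)) ^ 2
      + (ent γ 1 1) ^ 2 * ((ω : ℂ).im) ^ 2 := by
  have e1 : Xg (ω : ℂ) M * Yg (ω : ℂ) (γ*M)
      = Complex.normSq ((((ent M 0 0 : ℂ) * (ω : ℂ) + ent M 0 1))
          * (starRingEnd ℂ) ((ent (γ*M) 1 0 : ℂ) * (ω : ℂ) + ent (γ*M) 1 1)) := by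
    rw [Complex.normSq_mul, Complex.normSq_conj, Xg_normSq, Yg_normSq]
  rw [e1, rowM0 ω γ M]
  have e2 : ((ent γ 1 1 : ℂ) * ((ent (γ*M) 0 0 : ℂ) * (ω : ℂ) + ent (γ*M) 0 1)
      - (ent γ 0 1 : ℂ) * ((ent (γ*M) 1 0 : ℂ) * (ω : ℂ) + ent (γ*M) 1 1))
      * (starRingEnd ℂ) ((ent (γ*M) 1 0 : ℂ) * (ω : ℂ) + ent (γ*M) 1 1)
      = ((ent γ 1 1 * Zg (ω : ℂ) (γ*M) - ent γ 0 1 * Yg (ω : ℂ) (γ*M) : ℝ) : ℂ)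
        + ((ent γ 1 1 * (ω : ℂ).im : ℝ) : ℂ) * Complex.I := by
    have k1 := key_conj ω (γ*M)
    have k2 : ((ent (γ*M) 1 0 : ℂ) * (ω : ℂ) + ent (γ*M) 1 1)
        * (starRingEnd ℂ) ((ent (γ*M) 1 0 : ℂ) * (ω : ℂ) + ent (γ*M) 1 1)
        = ((Yg (ω : ℂ) (γ*M) : ℝ) : ℂ) := by
      rw [Complex.mul_conj, Yg_normSq]
    push_cast
    linear_combination (ent γ 1 1 : ℂ) * k1 - (ent γ 0 1 : ℂ) * k2
  rw [e2, Complex.normSq_add_mul_I]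
  ring

lemma I2 (γ M : SL(2,ℤ)) :
    Yg (ω : ℂ) M * Yg (ω : ℂ) (γ*M)
    = (ent γ 0 0 * Yg (ω : ℂ) (γ*M) - ent γ 1 0 * Zg (ω : ℂ) (γ*M)) ^ 2
      + (ent γ 1 0) ^ 2 * ((ω : ℂ).im) ^ 2 := by
  have e1 : Yg (ω : ℂ) M * Yg (ω : ℂ) (γ*M)
      = Complex.normSq ((((ent M 1 0 : ℂ) * (ω : ℂ) + ent M 1 1))
          * (starRingEnd ℂ) ((ent (γ*M) 1 0 : ℂ) * (ω : ℂ) + ent (γ*M) 1 1)) := by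
    rw [Complex.normSq_mul, Complex.normSq_conj, Yg_normSq, Yg_normSq]
  rw [e1, rowM1 ω γ M]
  have e2 : ((ent γ 0 0 : ℂ) * ((ent (γ*M) 1 0 : ℂ) * (ω : ℂ) + ent (γ*M) 1 1)
      - (ent γ 1 0 : ℂ) * ((ent (γ*M) 0 0 : ℂ) * (ω : ℂ) + ent (γ*M) 0 1))
      * (starRingEnd ℂ) ((ent (γ*M) 1 0 : ℂ) * (ω : ℂ) + ent (γ*M) 1 1)
      = ((ent γ 0 0 * Yg (ω : ℂ) (γ*M) - ent γ 1 0 * Zg (ω : ℂ) (γ*M) : ℝ) : ℂ)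
        + ((-(ent γ 1 0) * (ω : ℂ).im : ℝ) : ℂ) * Complex.I := by
    have k1 := key_conj ω (γ*M)
    have k2 : ((ent (γ*M) 1 0 : ℂ) * (ω : ℂ) + ent (γ*M) 1 1)
        * (starRingEnd ℂ) ((ent (γ*M) 1 0 : ℂ) * (ω : ℂ) + ent (γ*M) 1 1)
        = ((Yg (ω : ℂ) (γ*M) : ℝ) : ℂ) := by
      rw [Complex.mul_conj, Yg_normSq]
    push_cast
    linear_combination (ent γ 0 0 : ℂ) * k2 - (ent γ 1 0 : ℂ) * k1
  rw [e2, Complex.normSq_add_mul_I]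
  ring

/-- `aY - cZ = cu + d` -/
lemma aYcZ (δ : SL(2,ℤ)) :
    ent δ 0 0 * Yg (ω : ℂ) δ - ent δ 1 0 * Zg (ω : ℂ) δ
      = ent δ 1 0 * (ω : ℂ).re + ent δ 1 1 := by
  rw [Yg_eq, Zg, absq]
  linear_combination (ent δ 1 0 * (ω : ℂ).re + ent δ 1 1) * entdet δ

/-- `dZ - bY = c k² + u d` -/
lemma dZbY (δ : SL(2,ℤ)) :
    ent δ 1 1 * Zg (ω : ℂ) δ - ent δ 0 1 * Yg (ω : ℂ) δ
      = ent δ 1 0 * ((ω : ℂ).re ^ 2 + (ω : ℂ).im ^ 2) + (ω : ℂ).re * ent δ 1 1 := by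
  rw [Yg_eq, Zg, absq]
  linear_combination (ent δ 1 1 * (ω : ℂ).re
    + ent δ 1 0 * ((ω : ℂ).re ^ 2 + (ω : ℂ).im ^ 2)) * entdet δ

lemma denom_ne (δ : SL(2,ℤ)) : (ent δ 1 0 : ℂ) * (ω : ℂ) + ent δ 1 1 ≠ 0 := by
  intro h
  have him : ent δ 1 0 * (ω : ℂ).im = 0 := by
    have := congrArg Complex.im h
    simpa [Complex.add_im, Complex.mul_im] using this
  have hc : ent δ 1 0 = 0 := by
    rcases mul_eq_zero.1 him with h' | h'
    · exact h'
    · exact absurd h' (ne_of_gt ω.2)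
  have hd : ent δ 1 1 = 0 := by
    have := congrArg Complex.re h
    simpa [Complex.add_re, Complex.mul_re, hc] using this
  have := entdet δ
  rw [hc, hd] at this
  norm_num at this

lemma Yg_pos (δ : SL(2,ℤ)) : 0 < Yg (ω : ℂ) δ := by
  rw [Yg]
  exact pow_pos (norm_pos_iff.mpr (denom_ne ω δ)) 2

lemma smul_coe (δ : SL(2,ℤ)) :
    ((δ • ω : ℍ) : ℂ)
      = ((ent δ 0 0 : ℂ) * (ω : ℂ) + ent δ 0 1) /
        ((ent δ 1 0 : ℂ) * (ω : ℂ) + ent δ 1 1) := by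
  rw [UpperHalfPlane.specialLinearGroup_apply]
  simp [ent, UpperHalfPlane.coe_mk]

lemma smul_eq (δ : SL(2,ℤ)) :
    ((δ • ω : ℍ) : ℂ)
      = ((Zg (ω : ℂ) δ : ℝ) + ((ω : ℂ).im : ℝ) * Complex.I) / ((Yg (ω : ℂ) δ : ℝ) : ℂ) := by
  rw [smul_coe]
  have hY : ((Yg (ω : ℂ) δ : ℝ) : ℂ) ≠ 0 := by
    exact_mod_cast (ne_of_gt (Yg_pos ω δ))
  rw [div_eq_div_iff (denom_ne ω δ) hY]
  have k2 : ((ent δ 1 0 : ℂ) * (ω : ℂ) + ent δ 1 1)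
      * (starRingEnd ℂ) ((ent δ 1 0 : ℂ) * (ω : ℂ) + ent δ 1 1)
      = ((Yg (ω : ℂ) δ : ℝ) : ℂ) := by
    rw [Complex.mul_conj, Yg, Complex.sq_norm]
  calc ((ent δ 0 0 : ℂ) * (ω : ℂ) + ent δ 0 1) * ((Yg (ω : ℂ) δ : ℝ) : ℂ)
      = ((ent δ 0 0 : ℂ) * (ω : ℂ) + ent δ 0 1) *
          (((ent δ 1 0 : ℂ) * (ω : ℂ) + ent δ 1 1)
            * (starRingEnd ℂ) ((ent δ 1 0 : ℂ) * (ω : ℂ) + ent δ 1 1)) := by rw [k2]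
    _ = (((ent δ 0 0 : ℂ) * (ω : ℂ) + ent δ 0 1) *
          (starRingEnd ℂ) ((ent δ 1 0 : ℂ) * (ω : ℂ) + ent δ 1 1))
          * ((ent δ 1 0 : ℂ) * (ω : ℂ) + ent δ 1 1) := by ring
    _ = ((Zg (ω : ℂ) δ : ℝ) + ((ω : ℂ).im : ℝ) * Complex.I)
          * ((ent δ 1 0 : ℂ) * (ω : ℂ) + ent δ 1 1) := by rw [key_conj]

lemma smul_split (δ : SL(2,ℤ)) :
    ((δ • ω : ℍ) : ℂ)
      = ((Zg (ω : ℂ) δ / Yg (ω : ℂ) δ : ℝ) : ℂ)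
        + (((ω : ℂ).im / Yg (ω : ℂ) δ : ℝ) : ℂ) * Complex.I := by
  rw [smul_eq]
  have hY : (Yg (ω : ℂ) δ) ≠ 0 := ne_of_gt (Yg_pos ω δ)
  rw [Complex.ofReal_div, Complex.ofReal_div]
  field_simp

lemma Phi_eq (δ : SL(2,ℤ)) : Phi ω δ = Zg (ω : ℂ) δ / Yg (ω : ℂ) δ := by
  rw [Phi, smul_split]
  simp

lemma Im_smul (δ : SL(2,ℤ)) :
    ((δ • ω : ℍ) : ℂ).im = (ω : ℂ).im / Yg (ω : ℂ) δ := by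
  rw [smul_split]
  simp

/-- L3 : `Y_{γM} ≥ max(X_M, Y_M)` for nonnegative `M` and positive `c,d`. -/
lemma L3 (γ M : SL(2,ℤ)) (hM : ∀ i j, (0:ℤ) ≤ M i j)
    (hc : 0 < γ 1 0) (hd : 0 < γ 1 1) (hu0 : 0 ≤ (ω : ℂ).re) :
    max (Xg (ω : ℂ) M) (Yg (ω : ℂ) M) ≤ Yg (ω : ℂ) (γ * M) := by
  have hc1 : (1:ℝ) ≤ ent γ 1 0 := by
    have h' : (1:ℤ) ≤ γ 1 0 := hc
    simp only [ent]; exact_mod_cast h'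
  have hd1 : (1:ℝ) ≤ ent γ 1 1 := by
    have h' : (1:ℤ) ≤ γ 1 1 := hd
    simp only [ent]; exact_mod_cast h'
  have hMr : ∀ i j, (0:ℝ) ≤ ent M i j := by
    intro i j; simp only [ent]; exact_mod_cast hM i j
  have hv0 : (0:ℝ) ≤ (ω : ℂ).im ^ 2 := sq_nonneg _
  rw [Yg_eq ω (γ * M), mul_ent, mul_ent, Xg_eq, Yg_eq]
  set u := (ω : ℂ).re
  set c := ent γ 1 0
  set d := ent γ 1 1
  set e := ent M 0 0
  set f := ent M 0 1
  set g := ent M 1 0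
  set h := ent M 1 1
  have he := hMr 0 0
  have hf := hMr 0 1
  have hg := hMr 1 0
  have hh := hMr 1 1
  have key : ∀ p q : ℝ, 0 ≤ p → 0 ≤ q →
      (p * u + q) ^ 2 + p ^ 2 * (ω : ℂ).im ^ 2
        ≤ ((c * e + d * g) * u + (c * f + d * h)) ^ 2
          + (c * e + d * g) ^ 2 * (ω : ℂ).im ^ 2 →
      True := fun _ _ _ _ _ => trivial
  apply max_le
  · have t1 : e * u + f ≤ (c * e + d * g) * u + (c * f + d * h) := by
      have q1 : e * u ≤ c * (e * u) := by
        nlinarith only [hc1, mul_nonneg he hu0]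
      have q2 : f ≤ c * f := by nlinarith only [hc1, hf]
      have q3 : 0 ≤ d * g * u := by positivity
      have q4 : 0 ≤ d * h := by positivity
      nlinarith only [q1, q2, q3, q4]
    have t0 : 0 ≤ e * u + f := by positivity
    have t2 : (e * u + f) ^ 2 ≤ ((c * e + d * g) * u + (c * f + d * h)) ^ 2 := by
      nlinarith only [t1, t0]
    have t3 : e ≤ c * e + d * g := by
      nlinarith only [hc1, he, mul_nonneg (by linarith only [hd1] : (0:ℝ) ≤ d) hg]
    have t4 : e ^ 2 * (ω : ℂ).im ^ 2 ≤ (c * e + d * g) ^ 2 * (ω : ℂ).im ^ 2 := by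
      have : e ^ 2 ≤ (c * e + d * g) ^ 2 := by nlinarith only [t3, he]
      exact mul_le_mul_of_nonneg_right this hv0
    linarith only [t2, t4]
  · have t1 : g * u + h ≤ (c * e + d * g) * u + (c * f + d * h) := by
      have q1 : g * u ≤ d * (g * u) := by
        nlinarith only [hd1, mul_nonneg hg hu0]
      have q2 : h ≤ d * h := by nlinarith only [hd1, hh]
      have q3 : 0 ≤ c * e * u := by positivity
      have q4 : 0 ≤ c * f := by positivity
      nlinarith only [q1, q2, q3, q4]
    have t0 : 0 ≤ g * u + h := by positivity
    have t2 : (g * u + h) ^ 2 ≤ ((c * e + d * g) * u + (c * f + d * h)) ^ 2 := by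
      nlinarith only [t1, t0]
    have t3 : g ≤ c * e + d * g := by
      nlinarith only [hd1, hg, mul_nonneg (by linarith only [hc1] : (0:ℝ) ≤ c) he]
    have t4 : g ^ 2 * (ω : ℂ).im ^ 2 ≤ (c * e + d * g) ^ 2 * (ω : ℂ).im ^ 2 := by
      have : g ^ 2 ≤ (c * e + d * g) ^ 2 := by nlinarith only [t3, hg]
      exact mul_le_mul_of_nonneg_right this hv0
    linarith only [t2, t4]

/-- integer-pair lower bound -/
lemma int_pair (n₁ n₂ : ℤ) (hne : ¬(n₁ = 0 ∧ n₂ = 0)) :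
    min 1 (ω : ℂ).im ≤ Norm.norm (((n₁ : ℝ) : ℂ) * (ω : ℂ) + ((n₂ : ℝ) : ℂ)) := by
  have hv : 0 < (ω : ℂ).im := ω.2
  have hμ0 : 0 ≤ min 1 (ω : ℂ).im := le_min zero_le_one hv.le
  have habs : (Norm.norm (((n₁ : ℝ) : ℂ) * (ω : ℂ) + ((n₂ : ℝ) : ℂ))) ^ 2
      = ((n₁ : ℝ) * (ω : ℂ).re + (n₂ : ℝ)) ^ 2 + ((n₁ : ℝ)) ^ 2 * (ω : ℂ).im ^ 2 := by
    rw [Complex.sq_norm, Complex.normSq_apply]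
    simp only [Complex.add_re, Complex.add_im, Complex.mul_re, Complex.mul_im,
      Complex.ofReal_re, Complex.ofReal_im]
    ring
  have hsq : (min 1 (ω : ℂ).im) ^ 2
      ≤ (Norm.norm (((n₁ : ℝ) : ℂ) * (ω : ℂ) + ((n₂ : ℝ) : ℂ))) ^ 2 := by
    rw [habs]
    rcases eq_or_ne n₁ 0 with h1 | h1
    · have h2 : n₂ ≠ 0 := by
        intro h2; exact hne ⟨h1, h2⟩
      have : (1:ℝ) ≤ ((n₂ : ℝ)) ^ 2 := by
        have : (1:ℤ) ≤ n₂ ^ 2 := by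
          rcases lt_or_gt_of_ne h2 with h | h <;> nlinarith
        exact_mod_cast this
      have hm : min 1 (ω : ℂ).im ≤ 1 := min_le_left _ _
      have hmsq : (min 1 (ω : ℂ).im) ^ 2 ≤ 1 := by nlinarith only [hm, hμ0]
      rw [h1]
      push_cast
      nlinarith only [hmsq, this, sq_nonneg ((0:ℝ) * (ω : ℂ).re + (n₂ : ℝ))]
    · have : (1:ℝ) ≤ ((n₁ : ℝ)) ^ 2 := by
        have : (1:ℤ) ≤ n₁ ^ 2 := by
          rcases lt_or_gt_of_ne h1 with h | h <;> nlinarith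
        exact_mod_cast this
      have hm : min 1 (ω : ℂ).im ≤ (ω : ℂ).im := min_le_right _ _
      have hmsq : (min 1 (ω : ℂ).im) ^ 2 ≤ (ω : ℂ).im ^ 2 := by nlinarith only [hm, hμ0, hv]
      nlinarith only [hmsq, this, sq_nonneg ((n₁ : ℝ) * (ω : ℂ).re + (n₂ : ℝ)), sq_nonneg ((ω:ℂ).im)]
  nlinarith only [hsq, hμ0, norm_nonneg (((n₁ : ℝ) : ℂ) * (ω : ℂ) + ((n₂ : ℝ) : ℂ))]

/-- helper for `Q₀` conditions -/
lemma rpow_ge {C e Q : ℝ} (hC : 0 ≤ C) (he : 0 < e) (hQ : C ^ (1/e) ≤ Q) (hQ1 : 0 ≤ Q) :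
    C ≤ Q ^ e := by
  have h1 : (C ^ (1/e)) ^ e = C := by
    rw [← Real.rpow_mul hC, one_div, inv_mul_cancel₀ (ne_of_gt he), Real.rpow_one]
  calc C = (C ^ (1/e)) ^ e := h1.symm
    _ ≤ Q ^ e := Real.rpow_le_rpow (Real.rpow_nonneg hC _) hQ he.le

end St8


open St8 in
/-- Lemma 7: for `ω` in the half fundamental domain with `u, k² ∈ ℚ`,
`ξ > 0` and `β₀ ∈ (2/3,1)`, there is `Q₀ = Q₀(ξ,ω)` independent of `M` such that
`𝓝⁺_{M,Q}(ξ) = 0` whenever `Q ≥ Q₀`, `M ∈ 𝔖` and `max{X_M, Y_M} ≥ Q^{2β₀}`. -/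
theorem NMQplus_eq_zero (ω : ℍ)
    (hk1 : Norm.norm (ω : ℂ) ≤ 1) (hu0 : 0 ≤ (ω : ℂ).re)
    (hω1 : Norm.norm ((ω : ℂ) - 1) ≤ 1)
    (huQ : ∃ q : ℚ, (q : ℝ) = (ω : ℂ).re)
    (hkQ : ∃ q : ℚ, (q : ℝ) = (Norm.norm (ω : ℂ)) ^ 2)
    (ξ : ℝ) (hξ : 0 < ξ) (β₀ : ℝ) (hβ : β₀ ∈ Set.Ioo (2/3 : ℝ) 1) :
    ∃ Q₀ : ℝ, ∀ Q : ℝ, Q₀ ≤ Q → ∀ M : SL(2,ℤ),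
      (∀ i j, 0 ≤ M i j) → M ≠ 1 →
      Q ^ (2 * β₀) ≤ max (Xg ω M) (Yg ω M) →
      NMQplus ω M Q ξ = 0 := by
  obtain ⟨qu, hqu⟩ := huQ
  obtain ⟨qk, hqk⟩ := hkQ
  obtain ⟨hβ1, hβ2⟩ := hβ
  -- basic quantities
  have hv : 0 < (ω : ℂ).im := ω.2
  have hk0 : 0 < Norm.norm (ω : ℂ) := by
    apply norm_pos_iff.mpr
    intro h
    rw [h] at hv
    simp at hv
  have hk2 : (Norm.norm (ω : ℂ)) ^ 2 = (ω : ℂ).re ^ 2 + (ω : ℂ).im ^ 2 := absq ω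
  have huk : (ω : ℂ).re < Norm.norm (ω : ℂ) := by nlinarith only [hk2, hv, hu0, hk0]
  have hv1 : (ω : ℂ).im ≤ 1 := by nlinarith only [hk2, hk1, hv, hk0, sq_nonneg ((ω : ℂ).re)]
  set v := (ω : ℂ).im with hv_def
  set u := (ω : ℂ).re with hu_def
  set k := Norm.norm (ω : ℂ) with hk_def
  -- constants
  set K₁ := (k - u) * k with hK₁def
  have hK₁ : 0 < K₁ := mul_pos (by linarith) hk0
  set μ := min 1 v with hμdef
  have hμ : 0 < μ := lt_min one_pos hv
  have hμ1 : μ ≤ 1 := min_le_left _ _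
  set D := ((qu.den * qk.den : ℕ) : ℝ) with hDdef
  have hD : 1 ≤ D := by
    rw [hDdef]
    exact_mod_cast Nat.one_le_iff_ne_zero.2 (Nat.mul_ne_zero qu.den_nz qk.den_nz)
  set Cα := (2*u^2 + 2*v^2)/v^2 with hCαdef
  set Cβ := (2*(u^2+v^2)^2 + 2*u^2*v^2)/v^2 with hCβdef
  have hCα : 0 ≤ Cα := by rw [hCαdef]; positivity
  have hCβ : 0 ≤ Cβ := by rw [hCβdef]; positivity
  set K₃ := 2 * (2 * max Cα Cβ + (2 + 2 / v ^ 2) * (ξ ^ 2 / K₁ ^ 2)) / K₁ with hK₃def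
  have hK₃ : 0 < K₃ := by
    rw [hK₃def]
    have : 0 ≤ max Cα Cβ := le_trans hCα (le_max_left _ _)
    positivity
  set K₄ := 2 * ξ * D * K₃ / (μ * Real.sqrt K₁) with hK₄def
  have hK₄ : 0 < K₄ := by
    rw [hK₄def]
    have h1 : 0 < Real.sqrt K₁ := Real.sqrt_pos.2 hK₁
    positivity
  refine ⟨max 1 (max ((2/K₁) ^ (1/(4*β₀-2))) (max ((4*v^2*D^2*K₃^2/μ^2) ^ (1/(6*β₀-4)))
      ((K₄+1) ^ (3:ℝ)))), ?_⟩
  intro Q hQQ₀ M hM hMne hmax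
  have hQ1 : 1 ≤ Q := le_trans (le_max_left _ _) hQQ₀
  have hQ0 : (0:ℝ) < Q := lt_of_lt_of_le one_pos hQ1
  -- the set is empty
  have hempty : SMQ ω M Q ξ ∩ {γ : SL(2,ℤ) | 0 < γ 1 0 ∧ 0 < γ 1 1} = ∅ := by
    rw [Set.eq_empty_iff_forall_notMem]
    intro γ hγ
    simp only [SMQ, Set.mem_inter_iff, Set.mem_setOf_eq] at hγ
    obtain ⟨⟨hPhi, _hin1, _hin2, hT1, hT2⟩, hcpos, hdpos⟩ := hγ
    set γ' := γ * M with hγ'def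
    set Y := Yg (ω : ℂ) γ with hYdef
    set Y' := Yg (ω : ℂ) γ' with hY'def
    set Z := Zg (ω : ℂ) γ with hZdef
    set Z' := Zg (ω : ℂ) γ' with hZ'def
    set c := ent γ 1 0 with hcdef
    set d := ent γ 1 1 with hddef
    have hc1 : (1:ℝ) ≤ c := by
      have h' : (1:ℤ) ≤ γ 1 0 := hcpos
      rw [hcdef]; simp only [ent]; exact_mod_cast h'
    have hd1 : (1:ℝ) ≤ d := by
      have h' : (1:ℤ) ≤ γ 1 1 := hdpos
      rw [hddef]; simp only [ent]; exact_mod_cast h'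
    have hcu : 0 ≤ c * u := mul_nonneg (by linarith) hu0
    have hYexp : Y = (c * u + d) ^ 2 + c ^ 2 * v ^ 2 := Yg_eq ω γ
    have hY1 : 1 ≤ Y := by nlinarith only [hYexp, hcu, hd1, sq_nonneg (c*v), sq_nonneg (c*u)]
    have h5 : d ^ 2 ≤ Y := by nlinarith only [hYexp, hcu, hd1, sq_nonneg (c*v), sq_nonneg (c*u)]
    have h6 : c ^ 2 * v ^ 2 ≤ Y := by nlinarith only [hYexp, hcu, hd1, sq_nonneg (c*u+d)]
    have hYpos : 0 < Y := Yg_pos ω γ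
    have hY'pos : 0 < Y' := Yg_pos ω γ'
    -- N
    set N := max (Xg (ω : ℂ) M) (Yg (ω : ℂ) M) with hNdef
    have hXM : 0 ≤ Xg (ω : ℂ) M := by rw [Xg]; positivity
    have hYM : 0 ≤ Yg (ω : ℂ) M := by rw [Yg]; positivity
    have hQN : Q ^ (2*β₀) ≤ N := hmax
    have hQrp1 : (1:ℝ) ≤ Q ^ (2*β₀) := by
      have h0 : Q ^ (0:ℝ) ≤ Q ^ (2*β₀) :=
        Real.rpow_le_rpow_of_exponent_le hQ1 (by linarith)
      rwa [Real.rpow_zero] at h0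
    have hN1 : 1 ≤ N := le_trans hQrp1 hQN
    have hNY' : N ≤ Y' := L3 ω γ M hM hcpos hdpos hu0
    -- quadratic identities
    have h1 := I1 ω γ M
    have h2 := I2 ω γ M
    have h3 : Y * (d * Z' - ent γ 0 1 * Y') = (c * (u^2+v^2) + u * d) * Y' + d * (Z' * Y - Z * Y') := by
      have hbz := dZbY ω γ
      linear_combination Y' * hbz
    have h4 : Y * (ent γ 0 0 * Y' - c * Z') = (c * u + d) * Y' - c * (Z' * Y - Z * Y') := by
      have haz := aYcZ ω γ
      linear_combination Y' * haz
    -- h7 h8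
    have hv2 : (0:ℝ) < v ^ 2 := by positivity
    have h7 : (c * (u^2+v^2) + u * d) ^ 2 ≤ Cβ * Y := by
      rw [hCβdef, div_mul_eq_mul_div, le_div_iff₀ hv2]
      nlinarith only [h5, h6, sq_nonneg (v*(c*(u^2+v^2) - u*d)), sq_nonneg (u*v), sq_nonneg (u^2+v^2)]
    have h8 : (c * u + d) ^ 2 ≤ Cα * Y := by
      rw [hCαdef, div_mul_eq_mul_div, le_div_iff₀ hv2]
      nlinarith only [h5, h6, sq_nonneg (v*(c*u - d)), sq_nonneg u, sq_nonneg v]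
    -- h9
    have ePhi : Phi ω γ' - Phi ω γ = (Z' * Y - Z * Y') / (Y * Y') := by
      rw [Phi_eq, Phi_eq]
      rw [div_sub_div _ _ (ne_of_gt hY'pos) (ne_of_gt hYpos)]
      rw [div_eq_div_iff (by positivity : (Y' * Y : ℝ) ≠ 0) (by positivity : (Y * Y' : ℝ) ≠ 0)]
      ring
    have h9 : |Z' * Y - Z * Y'| ≤ ξ * Y * Y' / Q ^ 2 := by
      have hPhi' := hPhi
      rw [ePhi, abs_div, abs_of_pos (mul_pos hYpos hY'pos)] at hPhi'
      rw [div_le_div_iff₀ (mul_pos hYpos hY'pos) (by positivity : (0:ℝ) < Q^2)] at hPhi'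
      rw [le_div_iff₀ (by positivity : (0:ℝ) < Q^2)]
      nlinarith only [hPhi']
    -- h12 h13
    have h12 : K₁ * Y ≤ Q ^ 2 := by
      have hTge := Tg_ge ω hu0 γ
      have hKY : K₁ * Y = (k - u) * k * Y := by rw [hK₁def]
      have hTnn : 0 ≤ Tg (ω:ℂ) γ := le_trans (by positivity) (hKY ▸ hTge)
      have e1 : Tg (ω:ℂ) γ = (Real.sqrt (Tg (ω:ℂ) γ)) ^ 2 := (Real.sq_sqrt hTnn).symm
      have e2 : (Real.sqrt (Tg (ω:ℂ) γ)) ^ 2 ≤ Q ^ 2 :=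
        pow_le_pow_left₀ (Real.sqrt_nonneg _) hT1 2
      calc K₁ * Y ≤ Tg (ω:ℂ) γ := hKY ▸ hTge
        _ = (Real.sqrt (Tg (ω:ℂ) γ)) ^ 2 := e1
        _ ≤ Q ^ 2 := e2
    have h13 : K₁ * Y' ≤ Q ^ 2 := by
      have hTge := Tg_ge ω hu0 γ'
      have hKY : K₁ * Y' = (k - u) * k * Y' := by rw [hK₁def]
      have hTnn : 0 ≤ Tg (ω:ℂ) γ' := le_trans (by positivity) (hKY ▸ hTge)
      have e1 : Tg (ω:ℂ) γ' = (Real.sqrt (Tg (ω:ℂ) γ')) ^ 2 := (Real.sq_sqrt hTnn).symm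
      have e2 : (Real.sqrt (Tg (ω:ℂ) γ')) ^ 2 ≤ Q ^ 2 :=
        pow_le_pow_left₀ (Real.sqrt_nonneg _) hT2 2
      calc K₁ * Y' ≤ Tg (ω:ℂ) γ' := hKY ▸ hTge
        _ = (Real.sqrt (Tg (ω:ℂ) γ')) ^ 2 := e1
        _ ≤ Q ^ 2 := e2
    -- s and the numerator/denominator of the Möbius image
    set W1 := (ent γ' 0 0 : ℂ) * (ω : ℂ) + ent γ' 0 1 with hW1def
    set W2 := (ent γ' 1 0 : ℂ) * (ω : ℂ) + ent γ' 1 1 with hW2def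
    have hW2ne : W2 ≠ 0 := denom_ne ω γ'
    set s := Norm.norm W2 with hsdef
    have h14 : Y' = s ^ 2 := by rw [hY'def, Yg, hsdef, hW2def]
    have hs : 0 ≤ s := norm_nonneg _
    have hspos : 0 < s := norm_pos_iff.mpr hW2ne
    -- h15 (Liouville)
    have h15 : μ / (D * Y * s) ≤ ξ / Q ^ 2 + v / Y' := by
      have hDpos : (0:ℝ) < D := lt_of_lt_of_le one_pos hD
      obtain ⟨Dz, hDz⟩ : ∃ z : ℤ, (z:ℝ) = D := by
        refine ⟨((qu.den * qk.den : ℕ) : ℤ), ?_⟩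
        rw [hDdef]; push_cast; ring
      obtain ⟨du, hdu⟩ : ∃ z : ℤ, (z:ℝ) = D * u := by
        refine ⟨(qk.den : ℤ) * qu.num, ?_⟩
        have hcd : (qu : ℝ) = (qu.num : ℝ) / (qu.den : ℝ) := by rw [Rat.cast_def]
        have hden : ((qu.den:ℝ)) ≠ 0 := by exact_mod_cast qu.den_nz
        rw [hDdef, ← hqu, hcd]
        push_cast
        field_simp
      obtain ⟨dk, hdk⟩ : ∃ z : ℤ, (z:ℝ) = D * (u^2+v^2) := by
        refine ⟨(qu.den : ℤ) * qk.num, ?_⟩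
        have hcd : (qk : ℝ) = (qk.num : ℝ) / (qk.den : ℝ) := by rw [Rat.cast_def]
        have hden : ((qk.den:ℝ)) ≠ 0 := by exact_mod_cast qk.den_nz
        rw [hDdef, ← hk2, ← hqk, hcd]
        push_cast
        field_simp
      obtain ⟨nY, hnY⟩ : ∃ z : ℤ, (z:ℝ) = D * Y := by
        refine ⟨(γ 1 0)^2 * dk + 2*(γ 1 0)*(γ 1 1)*du + (γ 1 1)^2*Dz, ?_⟩
        push_cast
        rw [hdu, hdk, hDz, hYexp, hcdef, hddef]
        simp only [ent]
        ring
      have hZexp : Z = ent γ 0 0 * ent γ 1 0 * (u^2+v^2) + ent γ 0 1 * ent γ 1 1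
          + u * (ent γ 0 0 * ent γ 1 1 + ent γ 0 1 * ent γ 1 0) := by
        rw [hZdef, Zg, hk2]
      obtain ⟨nZ, hnZ⟩ : ∃ z : ℤ, (z:ℝ) = D * Z := by
        refine ⟨(γ 0 0)*(γ 1 0)*dk + (γ 0 1)*(γ 1 1)*Dz + du*((γ 0 0)*(γ 1 1) + (γ 0 1)*(γ 1 0)), ?_⟩
        push_cast
        rw [hdu, hdk, hDz, hZexp]
        simp only [ent]
        ring
      obtain ⟨n1, hn1⟩ : ∃ z : ℤ, (z:ℝ) = D * (Y * ent γ' 0 0 - Z * ent γ' 1 0) := by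
        refine ⟨γ' 0 0 * nY - γ' 1 0 * nZ, ?_⟩
        push_cast
        rw [hnY, hnZ]
        simp only [ent]
        ring
      obtain ⟨n2, hn2⟩ : ∃ z : ℤ, (z:ℝ) = D * (Y * ent γ' 0 1 - Z * ent γ' 1 1) := by
        refine ⟨γ' 0 1 * nY - γ' 1 1 * nZ, ?_⟩
        push_cast
        rw [hnY, hnZ]
        simp only [ent]
        ring
      have hne : ¬(n1 = 0 ∧ n2 = 0) := by
        rintro ⟨e1, e2⟩
        rw [e1] at hn1
        rw [e2] at hn2
        have r1 : Y * ent γ' 0 0 - Z * ent γ' 1 0 = 0 := by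
          rcases mul_eq_zero.1 (by push_cast at hn1; linarith only [hn1] :
              D * (Y * ent γ' 0 0 - Z * ent γ' 1 0) = 0) with h | h
          · exact absurd h (ne_of_gt hDpos)
          · exact h
        have r2 : Y * ent γ' 0 1 - Z * ent γ' 1 1 = 0 := by
          rcases mul_eq_zero.1 (by push_cast at hn2; linarith only [hn2] :
              D * (Y * ent γ' 0 1 - Z * ent γ' 1 1) = 0) with h | h
          · exact absurd h (ne_of_gt hDpos)
          · exact h
        have hdet' := entdet γ'
        have hY0 : Y = 0 := by
          linear_combination (-Y) * hdet' + ent γ' 1 1 * r1 - ent γ' 1 0 * r2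
        linarith only [hY1, hY0]
      have hlow := int_pair ω n1 n2 hne
      have hYCne : ((Y:ℝ):ℂ) ≠ 0 := by exact_mod_cast ne_of_gt hYpos
      have enum : ((D:ℝ):ℂ) * (((Y:ℝ):ℂ) * W1 - ((Z:ℝ):ℂ) * W2)
          = ((n1:ℝ):ℂ) * (ω:ℂ) + ((n2:ℝ):ℂ) := by
        rw [hW1def, hW2def]
        have c1 : ((n1:ℝ):ℂ) = ((D * (Y * ent γ' 0 0 - Z * ent γ' 1 0) : ℝ) : ℂ) := by
          rw [hn1]
        have c2 : ((n2:ℝ):ℂ) = ((D * (Y * ent γ' 0 1 - Z * ent γ' 1 1) : ℝ) : ℂ) := by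
          rw [hn2]
        rw [c1, c2]
        push_cast
        ring
      have eΔ : ((γ' • ω : ℍ) : ℂ) - ((Z / Y : ℝ) : ℂ)
          = (((Y:ℝ):ℂ) * W1 - ((Z:ℝ):ℂ) * W2) / (((Y:ℝ):ℂ) * W2) := by
        rw [smul_coe ω γ', ← hW1def, ← hW2def, Complex.ofReal_div]
        field_simp
      have labs : μ / (D * Y * s) ≤ Norm.norm (((γ' • ω : ℍ) : ℂ) - ((Z / Y : ℝ) : ℂ)) := by
        rw [eΔ, norm_div]
        have edenom : Norm.norm (((Y:ℝ):ℂ) * W2) = Y * s := by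
          rw [norm_mul, Complex.norm_real, Real.norm_eq_abs, abs_of_pos hYpos, hsdef]
        have eabs : Norm.norm (((Y:ℝ):ℂ) * W1 - ((Z:ℝ):ℂ) * W2)
            = Norm.norm (((n1:ℝ):ℂ) * (ω:ℂ) + ((n2:ℝ):ℂ)) / D := by
          rw [← enum, norm_mul, Complex.norm_real, Real.norm_eq_abs, abs_of_pos hDpos]
          field_simp
        rw [eabs, edenom]
        have e2 : Norm.norm (((n1:ℝ):ℂ) * (ω:ℂ) + ((n2:ℝ):ℂ)) / D / (Y * s)
            = Norm.norm (((n1:ℝ):ℂ) * (ω:ℂ) + ((n2:ℝ):ℂ)) / (D * Y * s) := by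
          rw [div_div, mul_assoc]
        rw [e2]
        exact (div_le_div_iff_of_pos_right (mul_pos (mul_pos hDpos hYpos) hspos)).2 hlow
      have uabs : Norm.norm (((γ' • ω : ℍ) : ℂ) - ((Z / Y : ℝ) : ℂ)) ≤ ξ / Q ^ 2 + v / Y' := by
        have esplit : ((γ' • ω : ℍ) : ℂ) - ((Z / Y : ℝ) : ℂ)
            = ((Z'/Y' - Z/Y : ℝ) : ℂ) + ((v/Y' : ℝ) : ℂ) * Complex.I := by
          rw [smul_split ω γ']
          push_cast
          ring
        rw [esplit]
        refine le_trans (Complex.norm_le_abs_re_add_abs_im _) ?_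
        have hre : ((((Z'/Y' - Z/Y : ℝ)) : ℂ) + (((v/Y' : ℝ)) : ℂ) * Complex.I).re
            = Z'/Y' - Z/Y := by simp
        have him : ((((Z'/Y' - Z/Y : ℝ)) : ℂ) + (((v/Y' : ℝ)) : ℂ) * Complex.I).im
            = v/Y' := by simp
        rw [hre, him]
        have habs1 : |Z'/Y' - Z/Y| ≤ ξ/Q^2 := by
          have t := hPhi
          rw [Phi_eq ω γ', Phi_eq ω γ] at t
          exact t
        have habs2 : |v/Y'| = v/Y' := abs_of_pos (div_pos hv hY'pos)
        linarith only [habs1, habs2.le, habs2.ge]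
      exact le_trans labs uabs
    -- Q₀ conditions
    have hQc1 : 2 * Q ^ 2 ≤ K₁ * N ^ 2 := by
      have hc : 2/K₁ ≤ Q ^ (4*β₀-2) := by
        apply rpow_ge (by positivity) (by linarith : (0:ℝ) < 4*β₀-2) _ hQ0.le
        exact le_trans (le_trans (le_max_left _ _) (le_max_right 1 _)) hQQ₀
      have hNsq : (Q ^ (2*β₀)) ^ 2 ≤ N ^ 2 :=
        pow_le_pow_left₀ (by positivity) hQN 2
      have e1 : (Q ^ (2*β₀)) ^ (2:ℕ) = Q ^ (4*β₀) := by
        rw [← Real.rpow_natCast (Q ^ (2*β₀)) 2, ← Real.rpow_mul hQ0.le]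
        congr 1
        push_cast
        ring
      have e2 : Q ^ (4*β₀) = Q ^ (2:ℕ) * Q ^ (4*β₀ - 2) := by
        rw [← Real.rpow_natCast Q 2, ← Real.rpow_add hQ0]
        congr 1
        push_cast
        ring
      have t1 : Q ^ (2:ℕ) * (2/K₁) ≤ Q ^ (4*β₀) := by
        rw [e2]
        exact mul_le_mul_of_nonneg_left hc (by positivity)
      have t2 : K₁ * (Q ^ (2:ℕ) * (2/K₁)) ≤ K₁ * N ^ 2 := by
        apply mul_le_mul_of_nonneg_left _ hK₁.le
        calc Q ^ (2:ℕ) * (2/K₁) ≤ Q ^ (4*β₀) := t1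
          _ = (Q ^ (2*β₀)) ^ (2:ℕ) := e1.symm
          _ ≤ N ^ 2 := hNsq
      have e4 : K₁ * (Q ^ (2:ℕ) * (2/K₁)) = 2 * Q ^ 2 := by
        field_simp
      linarith only [t2, e4.le, e4.ge]
    have hQc2 : 4 * v ^ 2 * D ^ 2 *
        (2 * (2 * max Cα Cβ + (2 + 2 / v ^ 2) * (ξ ^ 2 / K₁ ^ 2)) / K₁) ^ 2 * Q ^ 4
        ≤ μ ^ 2 * N ^ 3 := by
      rw [← hK₃def]
      have hc : 4*v^2*D^2*K₃^2/μ^2 ≤ Q ^ (6*β₀-4) := by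
        apply rpow_ge (by positivity) (by linarith : (0:ℝ) < 6*β₀-4) _ hQ0.le
        exact le_trans (le_trans (le_trans (le_max_left _ _) (le_max_right _ _))
          (le_max_right 1 _)) hQQ₀
      have hNcu : (Q ^ (2*β₀)) ^ 3 ≤ N ^ 3 :=
        pow_le_pow_left₀ (by positivity) hQN 3
      have e1 : (Q ^ (2*β₀)) ^ (3:ℕ) = Q ^ (6*β₀) := by
        rw [← Real.rpow_natCast (Q ^ (2*β₀)) 3, ← Real.rpow_mul hQ0.le]
        congr 1
        push_cast
        ring
      have e2 : Q ^ (6*β₀) = Q ^ (4:ℕ) * Q ^ (6*β₀ - 4) := by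
        rw [← Real.rpow_natCast Q 4, ← Real.rpow_add hQ0]
        congr 1
        push_cast
        ring
      have t1 : Q ^ (4:ℕ) * (4*v^2*D^2*K₃^2/μ^2) ≤ Q ^ (6*β₀) := by
        rw [e2]
        exact mul_le_mul_of_nonneg_left hc (by positivity)
      have t2 : μ^2 * (Q ^ (4:ℕ) * (4*v^2*D^2*K₃^2/μ^2)) ≤ μ^2 * N ^ 3 := by
        apply mul_le_mul_of_nonneg_left _ (by positivity)
        calc Q ^ (4:ℕ) * (4*v^2*D^2*K₃^2/μ^2) ≤ Q ^ (6*β₀) := t1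
          _ = (Q ^ (2*β₀)) ^ (3:ℕ) := e1.symm
          _ ≤ N ^ 3 := hNcu
      have e4 : μ^2 * (Q ^ (4:ℕ) * (4*v^2*D^2*K₃^2/μ^2)) = 4*v^2*D^2*K₃^2*Q^4 := by
        field_simp
      linarith only [t2, e4.le, e4.ge]
    have hQc3 : 2 * ξ * D * (2 * (2 * max Cα Cβ + (2 + 2 / v ^ 2) * (ξ ^ 2 / K₁ ^ 2)) / K₁)
        / (μ * Real.sqrt K₁) * Q < N := by
      rw [← hK₃def, ← hK₄def]
      have hc : K₄ + 1 ≤ Q ^ ((1:ℝ)/3) := by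
        apply rpow_ge (by positivity) (by norm_num : (0:ℝ) < (1:ℝ)/3) _ hQ0.le
        have e : (K₄+1) ^ (1/((1:ℝ)/3)) = (K₄+1) ^ (3:ℝ) := by norm_num
        rw [e]
        exact le_trans (le_trans (le_trans (le_max_right _ _) (le_max_right _ _))
          (le_max_right 1 _)) hQQ₀
      have t0 : Q ^ ((4:ℝ)/3) ≤ Q ^ (2*β₀) :=
        Real.rpow_le_rpow_of_exponent_le hQ1 (by linarith)
      have t1 : Q ^ ((4:ℝ)/3) = Q * Q ^ ((1:ℝ)/3) := by
        rw [show (4:ℝ)/3 = 1 + 1/3 by norm_num, Real.rpow_add hQ0, Real.rpow_one]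
      have t2 : Q * (K₄ + 1) ≤ Q * Q ^ ((1:ℝ)/3) :=
        mul_le_mul_of_nonneg_left hc hQ0.le
      have t3 : Q * (K₄ + 1) ≤ N := by
        calc Q * (K₄ + 1) ≤ Q * Q ^ ((1:ℝ)/3) := t2
          _ = Q ^ ((4:ℝ)/3) := t1.symm
          _ ≤ Q ^ (2*β₀) := t0
          _ ≤ N := hQN
      nlinarith only [t3, hQ0, hK₄]
    exact St8.arith v μ D ξ Q K₁ Cα Cβ (Xg (ω : ℂ) M) (Yg (ω : ℂ) M) Y Y' s
      (Z' * Y - Z * Y') (d * Z' - ent γ 0 1 * Y') (ent γ 0 0 * Y' - c * Z')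
      (c * u + d) (c * (u^2+v^2) + u * d) c d N
      hv hv1 hμ hD hξ hQ1 hK₁ hCα hCβ hY1 hXM hYM hN1 (le_refl N) hNY'
      h1 h2 h3 h4 h5 h6 h7 h8 h9 h12 h13 h14 hs h15 hQc1 hQc2 hQc3
  rw [NMQplus, hempty, Set.ncard_empty]
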